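/- arXiv:2602.15177 — 2 statements merged into one kernel-verified Lean document; each statement's English description precedes it below -/
import Mathlib

section
/- Suppose the probability space Ω is finite. For every x ∈ ℝ and N ∈ 𝒩 the after-tax terminal wealth under the limited-use-of-losses rule equals the minimum over all artificial linear tax rules: V^α(x,N) = min_τ η^{(τ)}_T(N), where the minimum is taken over the finite set of all tax rules τ as defined in the context. -/
open MeasureTheory Filter Finset

noncomputable section
open scoped Classical

/-- Euclidean inner product on `Fin d → ℝ`. -/
def dotp {d : ℕ} (a b : Fin d → ℝ) : ℝ := ∑ j, a j * b j

/-- Euclidean norm on `Fin d → ℝ`. -/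
def eucNorm {d : ℕ} (a : Fin d → ℝ) : ℝ := Real.sqrt (∑ j, a j ^ 2)

/-- Accumulated realized gains and losses `G_t`, given the bank account history `eta`:
`G_t = ∑_{u=1}^t ( η_{u-1} r_u + ∑_{i=0}^{u-1} ⟨N_{i,u-1} - N_{i,u}, S_u - S_i⟩ )`. -/
def Gaux {d : ℕ} (S : ℕ → Fin d → ℝ) (r : ℕ → ℝ) (N : ℕ → ℕ → Fin d → ℝ)
    (eta : ℕ → ℝ) (t : ℕ) : ℝ :=
  ∑ u ∈ Finset.Icc 1 t,
    (eta (u - 1) * r u +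
      ∑ i ∈ Finset.range u, dotp (fun j => N i (u - 1) j - N i u j) (fun j => S u j - S i j))

/-- Limited-use-of-losses tax payments `Π_t = α · max_{0 ≤ u ≤ t} G_u`. -/
def Piaux {d : ℕ} (α : ℝ) (S : ℕ → Fin d → ℝ) (r : ℕ → ℝ) (N : ℕ → ℕ → Fin d → ℝ)
    (eta : ℕ → ℝ) (t : ℕ) : ℝ :=
  α * (Finset.range (t + 1)).sup' ⟨0, Finset.mem_range.mpr (Nat.succ_pos t)⟩ (fun u => Gaux S r N eta u)

/-- `etaHist α x S r N t` is the bank-account history after trading and taxes, up to time `t`: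
for `s ≤ t` it gives `η_s`, and for `s > t` it gives `η_t`.  It is defined by the
self-financing recursion `η_{-1} = x`,
`η_t - η_{t-1} = r_t η_{t-1} 1_{t ≥ 1} + ⟨∑_{i<t}(N_{i,t-1} - N_{i,t}) - N_{t,t}, S_t⟩
  - (Π_t - Π_{t-1}) 1_{t ≥ 1}`. -/
def etaHist {d : ℕ} (α x : ℝ) (S : ℕ → Fin d → ℝ) (r : ℕ → ℝ)
    (N : ℕ → ℕ → Fin d → ℝ) : ℕ → ℕ → ℝ :=
  Nat.rec (motive := fun _ => ℕ → ℝ)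
    (fun _ => x - dotp (fun j => N 0 0 j) (fun j => S 0 j))
    (fun t e => fun s =>
      if s ≤ t then e s
      else
        e t + r (t + 1) * e t
          + dotp
              (fun j => (∑ i ∈ Finset.range (t + 1), (N i t j - N i (t + 1) j))
                - N (t + 1) (t + 1) j)
              (fun j => S (t + 1) j)
          - (Piaux α S r N e (t + 1) - Piaux α S r N e t))

/-- A discrete-time market with horizon `T`, `d` risky assets, a filtration `F`,
adapted nonnegative-price processes are not required in general, and a nonnegative adapted
interest-rate process `r`. -/
structure Market (Ω : Type*) [m0 : MeasurableSpace Ω] (T d : ℕ) where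
  P : Measure Ω
  hProb : IsProbabilityMeasure P
  F : ℕ → MeasurableSpace Ω
  F_le : ∀ t, F t ≤ m0
  F_mono : Monotone F
  S : ℕ → Ω → Fin d → ℝ
  S_adapted : ∀ t, Measurable[F t] (S t)
  r : ℕ → Ω → ℝ
  r_nonneg : ∀ t ω, 0 ≤ r t ω
  r_adapted : ∀ t, Measurable[F t] (r t)

variable {Ω : Type*} [m0 : MeasurableSpace Ω] {T d : ℕ}

/-- A trading strategy: `N i t ω j` is the number of shares of asset `j` bought at time `i`
and still held after trading at time `t`.  It is `F t`-adapted, nonnegative, nonincreasing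
in `t` (for `i ≤ t < T`), forced to liquidate at `T`, and zero before the purchase date. -/
def Market.IsStrategy (M : Market Ω T d) (N : ℕ → ℕ → Ω → Fin d → ℝ) : Prop :=
  (∀ i t, Measurable[M.F t] (N i t)) ∧
  (∀ i t ω j, 0 ≤ N i t ω j) ∧
  (∀ i t, i ≤ t → t < T → ∀ ω j, N i (t + 1) ω j ≤ N i t ω j) ∧
  (∀ i ω j, N i T ω j = 0) ∧
  (∀ i t, t < i → ∀ ω j, N i t ω j = 0)

/-- After-tax terminal wealth `V^α(x,N) = η_T`. -/
def Market.V (M : Market Ω T d) (α x : ℝ) (N : ℕ → ℕ → Ω → Fin d → ℝ) (ω : Ω) : ℝ :=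
  etaHist α x (fun t => M.S t ω) (fun t => M.r t ω) (fun i t => N i t ω) T T

/-- The frictionless (tax-free) wealth process `V^0_t(x,N) = η_t + ⟨∑_{i≤t} N_{i,t}, S_t⟩`,
where `η` is the bank account for tax rate `0`. -/
def Market.V0proc (M : Market Ω T d) (x : ℝ) (N : ℕ → ℕ → Ω → Fin d → ℝ) (t : ℕ) (ω : Ω) : ℝ :=
  etaHist 0 x (fun u => M.S u ω) (fun u => M.r u ω) (fun i u => N i u ω) t t
    + dotp (fun j => ∑ i ∈ Finset.range (t + 1), N i t ω j) (fun j => M.S t ω j)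

/-- The no-arbitrage condition for tax rate `α`. -/
def Market.NA (M : Market Ω T d) (α : ℝ) : Prop :=
  ∀ N, M.IsStrategy N → (∀ᵐ ω ∂M.P, 0 ≤ M.V α 0 N ω) → ∀ᵐ ω ∂M.P, M.V α 0 N ω = 0

/-- The set `{V^α(x,N) : N ∈ 𝒩} - L^0(F_T; ℝ₊)` of attainable after-tax terminal wealths. -/
def Market.Vset (M : Market Ω T d) (α x : ℝ) : Set (Ω → ℝ) :=
  {f | ∃ N, M.IsStrategy N ∧
    ∃ g : Ω → ℝ, Measurable[M.F T] g ∧ (∀ ω, 0 ≤ g ω) ∧ f = fun ω => M.V α x N ω - g ω}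

/-- The frictionless wealth recursion
`V_t = (1+r_t) V_{t-1} + ⟨∑_{i<t} N_{i,t-1}, S_t - (1+r_t) S_{t-1}⟩`. -/
def wealth0 {d : ℕ} (S : ℕ → Fin d → ℝ) (r : ℕ → ℝ) (N : ℕ → ℕ → Fin d → ℝ) (x : ℝ) :
    ℕ → ℝ :=
  Nat.rec (motive := fun _ => ℝ) x (fun t W =>
    (1 + r (t + 1)) * W
      + dotp (fun j => ∑ i ∈ Finset.range (t + 1), N i t j)
          (fun j => S (t + 1) j - (1 + r (t + 1)) * S t j))

/-- Frictionless terminal wealth `V^0(x,N)`. -/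
def Market.V0 (M : Market Ω T d) (x : ℝ) (N : ℕ → ℕ → Ω → Fin d → ℝ) (ω : Ω) : ℝ :=
  wealth0 (fun t => M.S t ω) (fun t => M.r t ω) (fun i t => N i t ω) x T

/-- No-arbitrage for the frictionless model. -/
def Market.NA0 (M : Market Ω T d) : Prop :=
  ∀ N, M.IsStrategy N → (∀ᵐ ω ∂M.P, 0 ≤ M.V0 0 N ω) → ∀ᵐ ω ∂M.P, M.V0 0 N ω = 0

/-- The cone `ℛ_t` of reversible one-period strategies. -/
def Market.RevCone (M : Market Ω T d) (t : ℕ) : Set (Ω → Fin d → ℝ) :=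
  {β | Measurable[M.F t] β ∧ (∀ ω j, 0 ≤ β ω j) ∧
    ∀ᵐ ω ∂M.P, dotp (β ω) (fun j => M.S (t + 1) ω j - (1 + M.r (t + 1) ω) * M.S t ω j) = 0}

/-- `q` is the purely nonreversible part `q_t(β)` of `β`: it is `F_t`-measurable, nonnegative,
`β - q` is reversible, and `q` has minimal Euclidean norm among all such decompositions. -/
def Market.IsQ (M : Market Ω T d) (t : ℕ) (β q : Ω → Fin d → ℝ) : Prop :=
  Measurable[M.F t] q ∧ (∀ ω j, 0 ≤ q ω j) ∧
  (fun ω j => β ω j - q ω j) ∈ M.RevCone t ∧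
  ∀ q' : Ω → Fin d → ℝ, Measurable[M.F t] q' → (∀ ω j, 0 ≤ q' ω j) →
    (fun ω j => β ω j - q' ω j) ∈ M.RevCone t →
    ∀ᵐ ω ∂M.P, eucNorm (q ω) ≤ eucNorm (q' ω)

/-- `β` is purely nonreversible, i.e. `q_t(β) = β`. -/
def Market.PurelyNonRev (M : Market Ω T d) (t : ℕ) (β : Ω → Fin d → ℝ) : Prop :=
  M.IsQ t β β

/-- A reaction function: `R ω a i t` may depend on `ω` only through `F_t` and on the action
history `a` only through the actions up to time `t`; it is nonnegative, nonincreasing in `t`,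
vanishes at and after the horizon `T` and before the purchase date. -/
structure ReactionFun (M : Market Ω T d) where
  R : Ω → (ℕ → ℕ → Fin d → ℝ) → ℕ → ℕ → Fin d → ℝ
  nonneg : ∀ ω a i t j, 0 ≤ R ω a i t j
  adapted_actions : ∀ ω a a' i t, (∀ i' t', t' ≤ t → a i' t' = a' i' t') →
    R ω a i t = R ω a' i t
  meas : ∀ i t, Measurable[(M.F t).prod inferInstance]
    (fun p : Ω × (ℕ → ℕ → Fin d → ℝ) => R p.1 p.2 i t)
  antitone : ∀ ω a i t, i ≤ t → t + 2 ≤ T → ∀ j, R ω a i (t + 1) j ≤ R ω a i t j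
  upper : ∀ ω a i t, T ≤ t → ∀ j, R ω a i t j = 0
  lower : ∀ ω a i t, t < i → ∀ j, R ω a i t j = 0

/-- The strategy `R(N)` produced by a reaction function from a strategy `N`. -/
def ReactionFun.apply {M : Market Ω T d} (Rf : ReactionFun M)
    (N : ℕ → ℕ → Ω → Fin d → ℝ) : ℕ → ℕ → Ω → Fin d → ℝ :=
  fun i t ω => Rf.R ω (fun i' t' => N i' t' ω) i t

/-- `max_{i=0,…,T-1, j=1,…,d} N_{i,i,j}`. -/
def stratMax {Ω : Type*} {d : ℕ} (T : ℕ) (N : ℕ → ℕ → Ω → Fin d → ℝ) (ω : Ω) : ℝ :=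
  ⨆ i ∈ Finset.range T, ⨆ j : Fin d, N i i ω j

/-- A family of random variables is bounded in `L⁰` (bounded in probability). -/
def BoundedInL0 {Ω : Type*} [MeasurableSpace Ω] (P : Measure Ω) (𝒮 : Set (Ω → ℝ)) : Prop :=
  ∀ ε : ℝ, 0 < ε → ∃ C : ℝ, ∀ f ∈ 𝒮, P {ω | C < |f ω|} ≤ ENNReal.ofReal ε

/-- The "no unbounded non-substitutable investment with bounded risk" condition. -/
def Market.NUIBR (M : Market Ω T d) (α : ℝ) : Prop :=
  ∀ x : ℝ, ∃ Rf : ReactionFun M,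
    (∀ N, M.IsStrategy N → M.IsStrategy (Rf.apply N)) ∧
    (∀ N, M.IsStrategy N → ∀ᵐ ω ∂M.P, M.V α x N ω ≤ M.V α x (Rf.apply N) ω) ∧
    ∀ K : ℝ, 0 ≤ K →
      BoundedInL0 M.P (convexHull ℝ
        {f : Ω → ℝ | ∃ N, M.IsStrategy N ∧ (∀ᵐ ω ∂M.P, -K ≤ M.V α x N ω) ∧
          f = stratMax T (Rf.apply N)})

/-- A set of random variables is closed with respect to convergence in probability
(as a subset of `L⁰`, i.e. up to almost-sure equality). -/
def ClosedInProbability {Ω : Type*} [MeasurableSpace Ω] (P : Measure Ω)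
    (𝒮 : Set (Ω → ℝ)) : Prop :=
  ∀ (f : ℕ → Ω → ℝ) (g : Ω → ℝ), (∀ n, f n ∈ 𝒮) →
    TendstoInMeasure P f Filter.atTop g → ∃ g' ∈ 𝒮, g' =ᵐ[P] g


/-- Bank account process for an artificial linear tax rule `τ`:
taxes `Π^{(τ)}_t = α · G_{τ_t}` are paid according to the rule `τ` (with `τ 0 = 0`,
so that `Π^{(τ)}_0 = 0`).  `etaTau α x S r N τ t s` gives `η^{(τ)}_s` for `s ≤ t`. -/
def etaTau {d : ℕ} (α x : ℝ) (S : ℕ → Fin d → ℝ) (r : ℕ → ℝ)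
    (N : ℕ → ℕ → Fin d → ℝ) (τ : ℕ → ℕ) : ℕ → ℕ → ℝ :=
  Nat.rec (motive := fun _ => ℕ → ℝ)
    (fun _ => x - dotp (fun j => N 0 0 j) (fun j => S 0 j))
    (fun t e => fun s =>
      if s ≤ t then e s
      else
        e t + r (t + 1) * e t
          + dotp
              (fun j => (∑ i ∈ Finset.range (t + 1), (N i t j - N i (t + 1) j))
                - N (t + 1) (t + 1) j)
              (fun j => S (t + 1) j)
          - (α * Gaux S r N e (τ (t + 1)) - α * Gaux S r N e (τ t)))

variable {Ω : Type*} [m0 : MeasurableSpace Ω] {T d : ℕ}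

/-- An artificial linear tax rule: an adapted `{0,…,T}`-valued process `τ` with `τ_0 = 0`,
`τ` nondecreasing in `t`, `τ_t ≤ t`, and `τ_{τ_t} = τ_t` whenever `τ_t ≥ 1`. -/
def Market.IsTaxRule (M : Market Ω T d) (τ : ℕ → Ω → ℕ) : Prop :=
  (∀ ω, τ 0 ω = 0) ∧
  (∀ t, Measurable[M.F t] (τ t)) ∧
  (∀ t ω, τ t ω ≤ t) ∧
  (∀ t ω, τ t ω ≤ T) ∧
  (∀ s t, s ≤ t → ∀ ω, τ s ω ≤ τ t ω) ∧
  (∀ t ω, 1 ≤ τ t ω → τ (τ t ω) ω = τ t ω)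

/-- Terminal bank account `η^{(τ)}_T(N)` under the artificial tax rule `τ`. -/
def Market.etaTauT (M : Market Ω T d) (α x : ℝ) (N : ℕ → ℕ → Ω → Fin d → ℝ)
    (τ : ℕ → Ω → ℕ) (ω : Ω) : ℝ :=
  etaTau α x (fun t => M.S t ω) (fun t => M.r t ω) (fun i t => N i t ω) (fun t => τ t ω) T T

/-- A strategy realizes losses: it does not keep shares that trade below their purchase
price. -/
def Market.RealizesLosses (M : Market Ω T d) (N : ℕ → ℕ → Ω → Fin d → ℝ) : Prop :=
  ∀ i t j, i < t → t ≤ T → ∀ᵐ ω ∂M.P, M.S t ω j < M.S i ω j → N i t ω j = 0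

/-- The loss bound `L_t(N) = ((−x) ∨ 0 + ∑_{s<t} ⟨q_s(∑_{i≤s} N_{i,s}), S_s⟩)(1+r̄)^T`,
expressed through a given family `q s` of purely nonreversible parts. -/
def Lfun {Ω : Type*} {d : ℕ} (x rbar : ℝ) (T : ℕ) (S : ℕ → Ω → Fin d → ℝ)
    (q : ℕ → Ω → Fin d → ℝ) (t : ℕ) (ω : Ω) : ℝ :=
  (max (-x) 0 + ∑ s ∈ Finset.range t, dotp (q s ω) (fun j => S s ω j)) * (1 + rbar) ^ T

/-- A stopping time of the filtration `F`. -/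
def IsStoppingTimeFun {Ω : Type*} (F : ℕ → MeasurableSpace Ω) (τ : Ω → ℕ) : Prop :=
  ∀ t : ℕ, MeasurableSet[F t] {ω | τ ω ≤ t}

/-- The family of random variables over which the essential infimum defining `ε_t` is
taken. -/
def Market.epsFamily (M : Market Ω T d) (t : ℕ) : Set (Ω → ENNReal) :=
  {g | ∃ (ε : Ω → ℝ) (A : Set Ω) (N : ℕ → ℕ → Ω → Fin d → ℝ),
    Measurable[M.F t] ε ∧ (∀ ω, ε ω ∈ Set.Icc (0:ℝ) 1) ∧
    MeasurableSet[M.F t] A ∧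
    M.IsStrategy N ∧ (∀ i, i < t → ∀ ω j, N i i ω j = 0) ∧
    M.PurelyNonRev t (fun ω => N t t ω) ∧
    (∀ᵐ ω ∂M.P, eucNorm (N t t ω) = Set.indicator A (fun _ => (1:ℝ)) ω) ∧
    (∀ᵐ ω ∂M.P,
      (M.P[Set.indicator {ω' | M.V0 0 N ω' ≤ - ε ω'} (fun _ => (1:ℝ)) | M.F t]) ω ≤ ε ω) ∧
    g = fun ω => if ω ∈ A then ENNReal.ofReal (ε ω) else (⊤ : ENNReal)}

/-- `e` is the essential infimum of the family `𝒮` of `[0,∞]`-valued random variables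
(with respect to `P`, measurable with respect to `m'`). -/
def IsEssInfOfSet {Ω : Type*} [MeasurableSpace Ω] (m' : MeasurableSpace Ω) (P : Measure Ω)
    (𝒮 : Set (Ω → ENNReal)) (e : Ω → ENNReal) : Prop :=
  Measurable[m'] e ∧ (∀ g ∈ 𝒮, ∀ᵐ ω ∂P, e ω ≤ g ω) ∧
  ∀ e' : Ω → ENNReal, Measurable[m'] e' → (∀ g ∈ 𝒮, ∀ᵐ ω ∂P, e' ω ≤ g ω) →
    ∀ᵐ ω ∂P, e' ω ≤ e ω

/-- The positive part of an extended-real number, as an element of `[0,∞]`. -/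
def erealPos (y : EReal) : ENNReal := if y = ⊤ then ⊤ else ENNReal.ofReal y.toReal

/-- A utility function: `U = -∞` on the negative half-line, real-valued, nondecreasing and
concave on the positive half-line (with real restriction `u`), and continuous from the
right at `0`. -/
structure UtilityFun where
  U : ℝ → EReal
  u : ℝ → ℝ
  neg_bot : ∀ y : ℝ, y < 0 → U y = ⊥
  pos_real : ∀ y : ℝ, 0 < y → U y = (u y : EReal)
  mono : MonotoneOn u (Set.Ioi (0:ℝ))
  concave : ConcaveOn ℝ (Set.Ioi (0:ℝ)) u
  zero_lim : Filter.Tendsto U (nhdsWithin 0 (Set.Ioi (0:ℝ))) (nhds (U 0))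

/-- Expected utility `E[U(X)] = E[U⁺(X)] - E[U⁻(X)]`, with the convention that it equals
`-∞` whenever `E[U⁻(X)] = ∞`. -/
def expUtility {Ω : Type*} [MeasurableSpace Ω] (P : Measure Ω) (Uf : UtilityFun)
    (X : Ω → ℝ) : EReal :=
  if (∫⁻ ω, erealPos (-(Uf.U (X ω))) ∂P) = ⊤ then ⊥
  else ((∫⁻ ω, erealPos (Uf.U (X ω)) ∂P : ENNReal) : EReal)
    - ((∫⁻ ω, erealPos (-(Uf.U (X ω))) ∂P : ENNReal) : EReal)

/-- The value function `u^α(x) = sup_{N ∈ 𝒜^α(x)} E[U(V^α(x,N))]` of the utility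
maximization problem with taxes. -/
def Market.valueFn (M : Market Ω T d) (Uf : UtilityFun) (α x : ℝ) : EReal :=
  ⨆ N ∈ {N : ℕ → ℕ → Ω → Fin d → ℝ |
      M.IsStrategy N ∧ ∀ᵐ ω ∂M.P, 0 ≤ M.V α x N ω},
    expUtility M.P Uf (fun ω => M.V α x N ω)

/-- The value function `u^0(x)` of the frictionless utility maximization problem. -/
def Market.valueFn0 (M : Market Ω T d) (Uf : UtilityFun) (x : ℝ) : EReal :=
  ⨆ N ∈ {N : ℕ → ℕ → Ω → Fin d → ℝ |
      M.IsStrategy N ∧ ∀ᵐ ω ∂M.P, 0 ≤ M.V0 x N ω},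
    expUtility M.P Uf (fun ω => M.V0 x N ω)

/-- The set `{V^α(x,N) : N ∈ 𝒜^α(x)} - L^0(F_T; ℝ₊)`. -/
def Market.VsetNonneg (M : Market Ω T d) (α x : ℝ) : Set (Ω → ℝ) :=
  {f | ∃ N, M.IsStrategy N ∧ (∀ᵐ ω ∂M.P, 0 ≤ M.V α x N ω) ∧
    ∃ g : Ω → ℝ, Measurable[M.F T] g ∧ (∀ ω, 0 ≤ g ω) ∧ f = fun ω => M.V α x N ω - g ω}

/-- The set `{V^0(x,N) : N ∈ 𝒩} - L^0(F_T; ℝ₊)` for the frictionless model. -/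
def Market.V0set (M : Market Ω T d) (x : ℝ) : Set (Ω → ℝ) :=
  {f | ∃ N, M.IsStrategy N ∧
    ∃ g : Ω → ℝ, Measurable[M.F T] g ∧ (∀ ω, 0 ≤ g ω) ∧ f = fun ω => M.V0 x N ω - g ω}

/-- A measurable (set-valued) random set: preimages of open sets are measurable. -/
def MeasRandomSet {Ω : Type*} (m : MeasurableSpace Ω) {d : ℕ}
    (K : Ω → Set (Fin d → ℝ)) : Prop :=
  ∀ O : Set (Fin d → ℝ), IsOpen O → MeasurableSet[m] {ω | (K ω ∩ O).Nonempty}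

/-- The random set `A_t = {β ∈ 𝒫_t : 1 + r_{t+1} + ⟨β, S_{t+1} - (1+r_{t+1})S_t⟩ ≥ 0 a.s.}`. -/
def Market.AtSet (M : Market Ω T d) (t : ℕ) : Set (Ω → Fin d → ℝ) :=
  {β | M.PurelyNonRev t β ∧
    ∀ᵐ ω ∂M.P, 0 ≤ 1 + M.r (t + 1) ω
      + dotp (β ω) (fun j => M.S (t + 1) ω j - (1 + M.r (t + 1) ω) * M.S t ω j)}

/-!
Fix a path `ω` and a tax rule `τ`, and let `D = η^{(τ)} - η`. The two bank accounts see the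
same trading cash flows, so
`D_t = (G^{(τ)}_t - G_t) + α (max_{u ≤ t} G_u - G^{(τ)}_{τ_t})` with
`G^{(τ)}_u - G_u = ∑_{v ≤ u} r_v D_{v-1}`.
Inductively `D ≥ 0`: since `τ_t ≤ t`, `r ≥ 0` and `α ≤ 1`, the interest term dominates `α` times
its part up to `τ_t`, and `G_{τ_t}` is at most the running maximum. If `τ_t` is a time at which
the running maximum of `G` is attained, the same identity gives `D ≡ 0`; choosing the first such
time makes `τ` adapted, nondecreasing and idempotent, i.e. a tax rule.
-/

section RunningMax

variable {β : Type*} [LinearOrder β] (g : ℕ → β)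

def runningMax (t : ℕ) : β := (range (t + 1)).sup' nonempty_range_add_one g

lemma le_runningMax {u t : ℕ} (h : u ≤ t) : g u ≤ runningMax g t :=
  le_sup' g (mem_range.mpr (Nat.lt_succ_of_le h))

lemma runningMax_mono : Monotone (runningMax g) := fun _ _ hst =>
  sup'_le _ _ fun _ hu => le_runningMax g ((Nat.lt_succ_iff.mp (mem_range.mp hu)).trans hst)

lemma runningMax_zero : runningMax g 0 = g 0 := sup'_singleton g

lemma runningMax_congr {g' : ℕ → β} {t : ℕ} (h : ∀ u ≤ t, g u = g' u) :
    runningMax g t = runningMax g' t :=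
  sup'_congr _ rfl fun u hu => h u (Nat.lt_succ_iff.mp (mem_range.mp hu))

lemma exists_le_and_eq_runningMax (t : ℕ) : ∃ u, u ≤ t ∧ g u = runningMax g t := by
  obtain ⟨u, hu, h⟩ := exists_mem_eq_sup' nonempty_range_add_one g
  exact ⟨u, Nat.lt_succ_iff.mp (mem_range.mp hu), h.symm⟩

def firstArgmax (t : ℕ) : ℕ := Nat.find (exists_le_and_eq_runningMax g t)

lemma firstArgmax_le (t : ℕ) : firstArgmax g t ≤ t :=
  (Nat.find_spec (exists_le_and_eq_runningMax g t)).1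

lemma apply_firstArgmax (t : ℕ) : g (firstArgmax g t) = runningMax g t :=
  (Nat.find_spec (exists_le_and_eq_runningMax g t)).2

lemma firstArgmax_mono : Monotone (firstArgmax g) := by
  intro s t hst
  by_contra! hlt
  have hmax : g (firstArgmax g t) = runningMax g s := by
    refine le_antisymm (le_runningMax g (hlt.le.trans (firstArgmax_le g s))) ?_
    exact (runningMax_mono g hst).trans (apply_firstArgmax g t).ge
  exact Nat.find_min _ hlt ⟨hlt.le.trans (firstArgmax_le g s), hmax⟩

lemma firstArgmax_firstArgmax (t : ℕ) : firstArgmax g (firstArgmax g t) = firstArgmax g t := by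
  have hmax : runningMax g (firstArgmax g t) = runningMax g t :=
    le_antisymm (runningMax_mono g (firstArgmax_le g t))
      ((apply_firstArgmax g t).symm.trans_le (le_runningMax g le_rfl))
  exact le_antisymm (firstArgmax_le _ _)
    (Nat.find_min' _ ⟨(firstArgmax_le _ _).trans (firstArgmax_le g t),
      (apply_firstArgmax g _).trans hmax⟩)

section Measurable

variable {δ : Type*} {m : MeasurableSpace δ} [MeasurableSpace β] [MeasurableSup₂ β]
  {f : ℕ → δ → β} {t : ℕ}

lemma measurable_runningMax (hf : ∀ u ≤ t, Measurable (f u)) :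
    Measurable fun ω => runningMax (f · ω) t :=
  Finset.measurable_range_sup'' hf

lemma measurable_firstArgmax [MeasurableEq β] (hf : ∀ u ≤ t, Measurable (f u)) :
    Measurable fun ω => firstArgmax (f · ω) t := by
  refine measurable_find _ fun u => ?_
  by_cases hu : u ≤ t
  · simpa [hu] using measurableSet_eq_fun (hf u hu) (measurable_runningMax hf)
  · simp [hu]

end Measurable

end RunningMax

lemma diag_eq_of_le {γ : Type*} {h : ℕ → ℕ → γ} (hsucc : ∀ t s, s ≤ t → h (t + 1) s = h t s)
    {s t : ℕ} (hst : s ≤ t) : h t s = h s s := by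
  induction t, hst using Nat.le_induction with
  | base => rfl
  | succ t hst ih => exact (hsucc t s hst).trans ih

namespace Pathwise

variable {d : ℕ} (α x : ℝ) (S : ℕ → Fin d → ℝ) (r : ℕ → ℝ) (N : ℕ → ℕ → Fin d → ℝ)
  (τ : ℕ → ℕ)

lemma Gaux_congr {e e' : ℕ → ℝ} {u : ℕ} (h : ∀ v < u, e v = e' v) :
    Gaux S r N e u = Gaux S r N e' u :=
  sum_congr rfl fun v hv => by rw [h (v - 1) (by grind)]

lemma Gaux_sub (e e' : ℕ → ℝ) (u : ℕ) :
    Gaux S r N e u - Gaux S r N e' u = ∑ v ∈ Icc 1 u, (e (v - 1) - e' (v - 1)) * r v := by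
  rw [Gaux, Gaux, ← sum_sub_distrib]
  exact sum_congr rfl fun v _ => by ring

lemma Gaux_zero (e : ℕ → ℝ) : Gaux S r N e 0 = 0 := rfl

def tradingCashFlow (t : ℕ) : ℝ :=
  dotp (fun j => (∑ i ∈ range (t + 1), (N i t j - N i (t + 1) j)) - N (t + 1) (t + 1) j)
    (fun j => S (t + 1) j)

def eta (t : ℕ) : ℝ := etaHist α x S r N t t

def gains : ℕ → ℝ := Gaux S r N (eta α x S r N)

def etaRule (t : ℕ) : ℝ := etaTau α x S r N τ t t

def gainsRule : ℕ → ℝ := Gaux S r N (etaRule α x S r N τ)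

local notation "η" => eta α x S r N
local notation "G" => gains α x S r N
local notation "η'" => etaRule α x S r N τ
local notation "G'" => gainsRule α x S r N τ

lemma etaHist_eq_eta {s t : ℕ} (hst : s ≤ t) : etaHist α x S r N t s = η s :=
  diag_eq_of_le (fun _ _ hs => if_pos hs) hst

lemma etaTau_eq_etaRule {s t : ℕ} (hst : s ≤ t) : etaTau α x S r N τ t s = η' s :=
  diag_eq_of_le (fun _ _ hs => if_pos hs) hst

lemma eta_succ (t : ℕ) :
    η (t + 1) = (1 + r (t + 1)) * η t + tradingCashFlow S N t
      - α * (runningMax G (t + 1) - runningMax G t) := by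
  have hmax : ∀ u ≤ t + 1,
      runningMax (Gaux S r N (etaHist α x S r N t)) u = runningMax G u := fun u hu =>
    runningMax_congr _ fun w hw =>
      Gaux_congr S r N fun v hv => etaHist_eq_eta α x S r N (by omega)
  have hstep : η (t + 1) = η t + r (t + 1) * η t + tradingCashFlow S N t
      - (α * runningMax (Gaux S r N (etaHist α x S r N t)) (t + 1)
        - α * runningMax (Gaux S r N (etaHist α x S r N t)) t) := if_neg (by omega)
  rw [hstep, hmax _ le_rfl, hmax _ (by omega)]
  ring

lemma etaRule_succ {t : ℕ} (hτ : ∀ t, τ t ≤ t) :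
    η' (t + 1) = (1 + r (t + 1)) * η' t + tradingCashFlow S N t
      - α * (G' (τ (t + 1)) - G' (τ t)) := by
  have hgains : ∀ u ≤ t + 1, Gaux S r N (etaTau α x S r N τ t) u = G' u := fun u hu =>
    Gaux_congr S r N fun v hv => etaTau_eq_etaRule α x S r N τ (by omega)
  have hstep : η' (t + 1) = η' t + r (t + 1) * η' t + tradingCashFlow S N t
      - (α * Gaux S r N (etaTau α x S r N τ t) (τ (t + 1))
        - α * Gaux S r N (etaTau α x S r N τ t) (τ t)) := if_neg (by omega)
  rw [hstep, hgains _ (hτ _), hgains _ ((hτ t).trans (by omega))]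
  ring

lemma etaRule_sub_eta (hτ0 : τ 0 = 0) (hτ : ∀ t, τ t ≤ t) (t : ℕ) :
    η' t - η t = (G' t - G t) + α * (runningMax G t - G' (τ t)) := by
  induction t with
  | zero =>
    have h0 : η' 0 = η 0 := rfl
    simp [h0, hτ0, runningMax_zero, gains, gainsRule, Gaux_zero]
  | succ t ih =>
    have hcarry : G' (t + 1) - G (t + 1) = G' t - G t + (η' t - η t) * r (t + 1) := by
      rw [gains, gainsRule, Gaux_sub, Gaux_sub, sum_Icc_succ_top (by omega)]
      simp
    rw [etaRule_succ α x S r N τ hτ, eta_succ]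
    linear_combination ih - hcarry

lemma eta_le_etaRule (hα0 : 0 ≤ α) (hα1 : α ≤ 1) (hr : ∀ t, 0 ≤ r t) (hτ0 : τ 0 = 0)
    (hτ : ∀ t, τ t ≤ t) (t : ℕ) : η t ≤ η' t := by
  induction t using Nat.strong_induction_on with
  | _ t ih =>
  have hterm : ∀ v ∈ Icc 1 t, 0 ≤ (η' (v - 1) - η (v - 1)) * r v := fun v hv =>
    mul_nonneg (sub_nonneg.2 (ih _ (by grind))) (hr v)
  have hsub : Icc 1 (τ t) ⊆ Icc 1 t := Icc_subset_Icc_right (hτ t)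
  have hcarry : 0 ≤ G' (τ t) - G (τ t) ∧ G' (τ t) - G (τ t) ≤ G' t - G t := by
    simp only [gains, gainsRule, Gaux_sub]
    exact ⟨sum_nonneg fun v hv => hterm v (hsub hv),
      sum_le_sum_of_subset_of_nonneg hsub fun v hv _ => hterm v hv⟩
  have hdiscount : α * (G' (τ t) - G (τ t)) ≤ G' t - G t :=
    (mul_le_of_le_one_left hcarry.1 hα1).trans hcarry.2
  have hmax : 0 ≤ α * (runningMax G t - G (τ t)) :=
    mul_nonneg hα0 (sub_nonneg.2 (le_runningMax _ (hτ t)))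
  linarith [etaRule_sub_eta α x S r N τ hτ0 hτ t]

lemma etaRule_eq_eta (hτ0 : τ 0 = 0) (hτ : ∀ t, τ t ≤ t) {T : ℕ}
    (hmax : ∀ t ≤ T, G (τ t) = runningMax G t) {t : ℕ} (ht : t ≤ T) : η' t = η t := by
  induction t using Nat.strong_induction_on with
  | _ t ih =>
  have hgains : ∀ u ≤ t, G' u = G u := fun u hu =>
    Gaux_congr S r N fun v hv => ih v (by omega) (by omega)
  have hdiff := etaRule_sub_eta α x S r N τ hτ0 hτ t
  rw [hgains t le_rfl, hgains _ (hτ t), hmax t ht] at hdiff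
  linarith

end Pathwise

namespace Market

variable (M : Market Ω T d) {N : ℕ → ℕ → Ω → Fin d → ℝ}

lemma measurable_Gaux (hN : ∀ i t, Measurable[M.F t] (N i t)) {e : ℕ → Ω → ℝ} {u t : ℕ}
    (hu : u ≤ t) (he : ∀ v < u, Measurable[M.F t] (e v)) :
    Measurable[M.F t] fun ω =>
      Gaux (M.S · ω) (M.r · ω) (fun i s => N i s ω) (e · ω) u := by
  refine Finset.measurable_sum _ fun v hv => ?_
  have hvt : v ≤ t := by grind
  have hS : ∀ s ≤ t, Measurable[M.F t] (M.S s) := fun s hs =>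
    (M.S_adapted s).mono (M.F_mono hs) le_rfl
  have hN' : ∀ i s, s ≤ t → Measurable[M.F t] (N i s) := fun i s hs =>
    (hN i s).mono (M.F_mono hs) le_rfl
  have hr : Measurable[M.F t] (M.r v) := (M.r_adapted v).mono (M.F_mono hvt) le_rfl
  refine ((he (v - 1) (by grind)).mul hr).add (Finset.measurable_sum _ fun i hi => ?_)
  have hSv := hS v hvt
  have hSi := hS i (by grind)
  have hNi := hN' i (v - 1) (by omega)
  have hNi' := hN' i v hvt
  unfold dotp
  fun_prop

lemma measurable_eta (hN : ∀ i t, Measurable[M.F t] (N i t)) (α x : ℝ) (t : ℕ) :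
    Measurable[M.F t] fun ω => Pathwise.eta α x (M.S · ω) (M.r · ω) (fun i s => N i s ω) t := by
  induction t using Nat.strong_induction_on with
  | _ t ih =>
  match t with
  | 0 =>
    have hN₀ := hN 0 0
    have hS₀ := M.S_adapted 0
    unfold Pathwise.eta etaHist dotp
    fun_prop
  | t + 1 =>
    have heta : ∀ v ≤ t, Measurable[M.F (t + 1)] fun ω =>
        Pathwise.eta α x (M.S · ω) (M.r · ω) (fun i s => N i s ω) v := fun v hv =>
      (ih v (by omega)).mono (M.F_mono (by omega)) le_rfl
    have hgains : ∀ u ≤ t + 1, Measurable[M.F (t + 1)] fun ω =>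
        Pathwise.gains α x (M.S · ω) (M.r · ω) (fun i s => N i s ω) u := fun u hu =>
      M.measurable_Gaux hN hu fun v hv => heta v (by omega)
    have hmax := measurable_runningMax hgains
    have hmax' := measurable_runningMax fun u (hu : u ≤ t) => hgains u (by omega)
    have heta_t := heta t le_rfl
    have hr := M.r_adapted (t + 1)
    have hS := M.S_adapted (t + 1)
    have hNt : ∀ i, Measurable[M.F (t + 1)] (N i t) := fun i =>
      (hN i t).mono (M.F_mono (by omega)) le_rfl
    have hNt' := (hN · (t + 1))
    simp only [Pathwise.eta_succ, Pathwise.tradingCashFlow, dotp]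
    fun_prop

lemma measurable_gains (hN : ∀ i t, Measurable[M.F t] (N i t)) (α x : ℝ) {u t : ℕ}
    (hu : u ≤ t) :
    Measurable[M.F t] fun ω =>
      Pathwise.gains α x (M.S · ω) (M.r · ω) (fun i s => N i s ω) u :=
  M.measurable_Gaux hN hu fun v hv =>
    (M.measurable_eta hN α x v).mono (M.F_mono (by omega)) le_rfl

/-- Capped at `T` because a tax rule has to be `{0,…,T}`-valued. -/
def argmaxTaxRule (α x : ℝ) (N : ℕ → ℕ → Ω → Fin d → ℝ) : ℕ → Ω → ℕ := fun t ω =>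
  firstArgmax (Pathwise.gains α x (M.S · ω) (M.r · ω) (fun i s => N i s ω)) (min t T)

lemma argmaxTaxRule_le (α x : ℝ) (N : ℕ → ℕ → Ω → Fin d → ℝ) (t : ℕ) (ω : Ω) :
    M.argmaxTaxRule α x N t ω ≤ min t T :=
  firstArgmax_le _ _

lemma isTaxRule_argmaxTaxRule (hN : ∀ i t, Measurable[M.F t] (N i t)) (α x : ℝ) :
    M.IsTaxRule (M.argmaxTaxRule α x N) := by
  refine ⟨fun ω => by simpa using M.argmaxTaxRule_le α x N 0 ω, fun t => ?_,
    fun t ω => (M.argmaxTaxRule_le α x N t ω).trans (min_le_left _ _),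
    fun t ω => (M.argmaxTaxRule_le α x N t ω).trans (min_le_right _ _),
    fun s t hst ω => firstArgmax_mono _ (min_le_min_right T hst), fun t ω _ => ?_⟩
  · exact (measurable_firstArgmax fun u hu => M.measurable_gains hN α x hu).mono
      (M.F_mono (min_le_left t T)) le_rfl
  · rw [argmaxTaxRule, min_eq_left ((M.argmaxTaxRule_le α x N t ω).trans (min_le_right _ _))]
    exact firstArgmax_firstArgmax _ _

lemma V_le_etaTauT {α : ℝ} (hα0 : 0 ≤ α) (hα1 : α ≤ 1) (x : ℝ) (N : ℕ → ℕ → Ω → Fin d → ℝ)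
    {τ : ℕ → Ω → ℕ} (hτ : M.IsTaxRule τ) (ω : Ω) : M.V α x N ω ≤ M.etaTauT α x N τ ω :=
  Pathwise.eta_le_etaRule α x _ _ _ _ hα0 hα1 (M.r_nonneg · ω) (hτ.1 ω) (hτ.2.2.1 · ω) T

lemma V_eq_etaTauT_argmaxTaxRule (α x : ℝ) (N : ℕ → ℕ → Ω → Fin d → ℝ) (ω : Ω) :
    M.V α x N ω = M.etaTauT α x N (M.argmaxTaxRule α x N) ω := by
  refine (Pathwise.etaRule_eq_eta α x _ _ _ _ (by simpa using M.argmaxTaxRule_le α x N 0 ω)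
    (fun t => (M.argmaxTaxRule_le α x N t ω).trans (min_le_left _ _)) (fun t ht => ?_) le_rfl).symm
  rw [argmaxTaxRule, min_eq_left ht]
  exact apply_firstArgmax _ t

end Market

theorem tax_wealth_eq_min_over_taxRules_general
    (M : Market Ω T d) (α : ℝ) (hα0 : 0 ≤ α) (hα1 : α < 1)
    (x : ℝ) (N : ℕ → ℕ → Ω → Fin d → ℝ) (hN : M.IsStrategy N) :
    (∀ τ : ℕ → Ω → ℕ, M.IsTaxRule τ →
      ∀ᵐ ω ∂M.P, M.V α x N ω ≤ M.etaTauT α x N τ ω) ∧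
    (∃ τ : ℕ → Ω → ℕ, M.IsTaxRule τ ∧
      ∀ᵐ ω ∂M.P, M.V α x N ω = M.etaTauT α x N τ ω) :=
  ⟨fun _ hτ => .of_forall (M.V_le_etaTauT hα0 hα1.le x N hτ),
    M.argmaxTaxRule α x N, M.isTaxRule_argmaxTaxRule hN.1 α x,
    .of_forall (M.V_eq_etaTauT_argmaxTaxRule α x N)⟩

/-- On a finite probability space, the after-tax terminal wealth under the
limited-use-of-losses rule is the minimum, over all artificial linear tax rules `τ`, of the
terminal bank account `η^{(τ)}_T(N)`. -/
theorem tax_wealth_eq_min_over_taxRules [Fintype Ω]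
    (M : Market Ω T d) (α : ℝ) (hα0 : 0 ≤ α) (hα1 : α < 1)
    (x : ℝ) (N : ℕ → ℕ → Ω → Fin d → ℝ) (hN : M.IsStrategy N) :
    (∀ τ : ℕ → Ω → ℕ, M.IsTaxRule τ →
      ∀ᵐ ω ∂M.P, M.V α x N ω ≤ M.etaTauT α x N τ ω) ∧
    (∃ τ : ℕ → Ω → ℕ, M.IsTaxRule τ ∧
      ∀ᵐ ω ∂M.P, M.V α x N ω = M.etaTauT α x N τ ω) :=
  tax_wealth_eq_min_over_taxRules_general M α hα0 hα1 x N hN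
end
end

section
/- The NUIBR condition implies the no-arbitrage condition: if the model satisfies the no unbounded non-substitutable investment with bounded risk (NUIBR) condition, then for every N ∈ 𝒩, V^α(0,N) ≥ 0 a.s. implies V^α(0,N) = 0 a.s. -/
open MeasureTheory Filter Finset

noncomputable section
open scoped Classical

variable {Ω : Type*} [m0 : MeasurableSpace Ω] {T d : ℕ}

variable {Ω : Type*} [m0 : MeasurableSpace Ω] {T d : ℕ}

/-!
At zero initial capital the after-tax wealth is positively homogeneous in the strategy, so if
`V^α(0,N) ≥ 0` then the scaled strategy `nN` has wealth `n V^α(0,N) ≥ 0`, and the reaction to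
`nN` has at least that wealth. On the other hand, the wealth of any strategy is at most its
largest purchase `max_{i,j} N_{i,i,j}` times a finite random factor depending only on prices and
interest rates. On `{V^α(0,N) > δ}` the largest purchase of the reaction to `nN` therefore
grows linearly in `n`, which NUIBR (with `K = 0`) allows only if this set is null.
-/

section Homogeneity

lemma etaHist_zero (α x : ℝ) (S : ℕ → Fin d → ℝ) (r : ℕ → ℝ) (N : ℕ → ℕ → Fin d → ℝ)
    (s : ℕ) : etaHist α x S r N 0 s = x - dotp (fun j => N 0 0 j) (fun j => S 0 j) := rfl

lemma etaHist_succ (α x : ℝ) (S : ℕ → Fin d → ℝ) (r : ℕ → ℝ) (N : ℕ → ℕ → Fin d → ℝ)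
    (t s : ℕ) :
    etaHist α x S r N (t + 1) s =
      if s ≤ t then etaHist α x S r N t s
      else
        etaHist α x S r N t t + r (t + 1) * etaHist α x S r N t t
          + dotp
              (fun j => (∑ i ∈ Finset.range (t + 1), (N i t j - N i (t + 1) j))
                - N (t + 1) (t + 1) j)
              (fun j => S (t + 1) j)
          - (Piaux α S r N (etaHist α x S r N t) (t + 1)
              - Piaux α S r N (etaHist α x S r N t) t) := rfl

lemma dotp_smul_left (c : ℝ) (a b : Fin d → ℝ) :
    dotp (fun j => c * a j) b = c * dotp a b := by
  simp only [dotp, Finset.mul_sum, mul_assoc]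

lemma Gaux_smul (c : ℝ) (S : ℕ → Fin d → ℝ) (r : ℕ → ℝ) (N : ℕ → ℕ → Fin d → ℝ)
    (e : ℕ → ℝ) (t : ℕ) :
    Gaux S r (fun i u j => c * N i u j) (fun s => c * e s) t = c * Gaux S r N e t := by
  simp only [Gaux, ← mul_sub, dotp_smul_left, Finset.mul_sum, mul_add]
  refine Finset.sum_congr rfl fun u _ => ?_
  ring

lemma Piaux_smul {c : ℝ} (hc : 0 ≤ c) (α : ℝ) (S : ℕ → Fin d → ℝ) (r : ℕ → ℝ)
    (N : ℕ → ℕ → Fin d → ℝ) (e : ℕ → ℝ) (t : ℕ) :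
    Piaux α S r (fun i u j => c * N i u j) (fun s => c * e s) t = c * Piaux α S r N e t := by
  simp only [Piaux, Gaux_smul]
  rw [mul_left_comm]
  exact congrArg (α * ·) (Finset.mul₀_sup' hc _ _ _).symm

lemma etaHist_smul {c : ℝ} (hc : 0 ≤ c) (α x : ℝ) (S : ℕ → Fin d → ℝ) (r : ℕ → ℝ)
    (N : ℕ → ℕ → Fin d → ℝ) (t s : ℕ) :
    etaHist α (c * x) S r (fun i u j => c * N i u j) t s = c * etaHist α x S r N t s := by
  induction t generalizing s with
  | zero => simp only [etaHist_zero, dotp_smul_left, mul_sub]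
  | succ t ih =>
    have hist : etaHist α (c * x) S r (fun i u j => c * N i u j) t =
        fun s => c * etaHist α x S r N t s := funext ih
    rw [etaHist_succ, etaHist_succ, hist]
    split_ifs
    · rfl
    · simp only [← mul_sub, ← Finset.mul_sum, dotp_smul_left, Piaux_smul hc]
      ring

end Homogeneity

section WealthBound

lemma abs_dotp_le {a : Fin d → ℝ} {m : ℝ} (ha : ∀ j, |a j| ≤ m) (b : Fin d → ℝ) :
    |dotp a b| ≤ m * ∑ j, |b j| := by
  rw [dotp, Finset.mul_sum]
  refine (Finset.abs_sum_le_sum_abs _ _).trans (Finset.sum_le_sum fun j _ => ?_)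
  rw [abs_mul]
  exact mul_le_mul_of_nonneg_right (ha j) (abs_nonneg _)

lemma abs_dotp_sub_le {a : Fin d → ℝ} {m : ℝ} (ha : ∀ j, |a j| ≤ m) (b b' : Fin d → ℝ) :
    |dotp a (fun j => b j - b' j)| ≤ m * (∑ j, |b j| + ∑ j, |b' j|) := by
  have hsplit : dotp a (fun j => b j - b' j) = dotp a b - dotp a b' := by
    simp only [dotp, mul_sub, Finset.sum_sub_distrib]
  rw [hsplit, mul_add]
  exact (abs_sub _ _).trans (add_le_add (abs_dotp_le ha b) (abs_dotp_le ha b'))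

/-- Per-period growth factor of the bound `(|x| + m) L^(t+1)` on `|η_t|` when positions are at
most `m` and interest rates and price sums `∑ j, |S_u j|` at most `c`: in `L - 1`, the part `c`
is interest, `(T + 1) c` trading and `α T c (1 + 2 T)` the change of the tax `Π`. -/
def wealthGrowth (α : ℝ) (T : ℕ) (c : ℝ) : ℝ := 1 + c * (T + 2 + α * T + 2 * α * T ^ 2)

lemma one_le_wealthGrowth {α c : ℝ} (hα : 0 ≤ α) (hc : 0 ≤ c) : 1 ≤ wealthGrowth α T c := by
  have : 0 ≤ c * (T + 2 + α * T + 2 * α * T ^ 2) := by positivity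
  unfold wealthGrowth
  linarith

lemma le_wealthGrowth {α c : ℝ} (hα : 0 ≤ α) (hc : 0 ≤ c) : c ≤ wealthGrowth α T c := by
  have : 0 ≤ c * (T + 1 + α * T + 2 * α * T ^ 2) := by positivity
  unfold wealthGrowth
  linarith

variable {S : ℕ → Fin d → ℝ} {r : ℕ → ℝ} {N : ℕ → ℕ → Fin d → ℝ} {c m : ℝ}

lemma abs_Gaux_le {e : ℕ → ℝ} {E : ℝ} {u : ℕ}
    (hr : ∀ v ≤ T, 0 ≤ r v ∧ r v ≤ c) (hS : ∀ v ≤ T, ∑ j, |S v j| ≤ c)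
    (hm : 0 ≤ m) (hN : ∀ i t j, t ≤ T → 0 ≤ N i t j ∧ N i t j ≤ m) (he : ∀ v, |e v| ≤ E)
    (hu : u ≤ T) :
    |Gaux S r N e u| ≤ T * (c * (E + 2 * T * m)) := by
  have hc : 0 ≤ c := (hr 0 (Nat.zero_le _)).1.trans (hr 0 (Nat.zero_le _)).2
  have hE : 0 ≤ E := (abs_nonneg _).trans (he 0)
  have hterm : ∀ v ∈ Finset.Icc 1 u, |e (v - 1) * r v + ∑ i ∈ Finset.range v,
      dotp (fun j => N i (v - 1) j - N i v j) (fun j => S v j - S i j)|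
        ≤ c * (E + 2 * T * m) := by
    intro v hv
    have hvT : v ≤ T := (Finset.mem_Icc.1 hv).2.trans hu
    have hrv := hr v hvT
    have hinterest : |e (v - 1) * r v| ≤ E * c := by
      rw [abs_mul, abs_of_nonneg hrv.1]
      exact mul_le_mul (he _) hrv.2 hrv.1 hE
    have htrades : |∑ i ∈ Finset.range v,
        dotp (fun j => N i (v - 1) j - N i v j) (fun j => S v j - S i j)|
          ≤ T * (m * (c + c)) := by
      refine (Finset.abs_sum_le_sum_abs _ _).trans
        ((Finset.sum_le_card_nsmul _ _ (m * (c + c)) fun i hi => ?_).trans ?_)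
      · have hiT : i ≤ T := (Finset.mem_range.1 hi).le.trans hvT
        have hΔN : ∀ j, |N i (v - 1) j - N i v j| ≤ m := fun j =>
          (abs_sub_le_of_le_of_le (hN i (v - 1) j (by omega)).1 (hN i (v - 1) j (by omega)).2
            (hN i v j hvT).1 (hN i v j hvT).2).trans_eq (sub_zero m)
        exact (abs_dotp_sub_le hΔN _ _).trans
          (mul_le_mul_of_nonneg_left (add_le_add (hS v hvT) (hS i hiT)) hm)
      · rw [Finset.card_range, nsmul_eq_mul]
        exact mul_le_mul_of_nonneg_right (by exact_mod_cast hvT) (by positivity)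
    calc _ ≤ _ := abs_add_le _ _
      _ ≤ E * c + T * (m * (c + c)) := add_le_add hinterest htrades
      _ = c * (E + 2 * T * m) := by ring
  refine (Finset.abs_sum_le_sum_abs _ _).trans ((Finset.sum_le_card_nsmul _ _ _ hterm).trans ?_)
  rw [Nat.card_Icc, nsmul_eq_mul]
  exact mul_le_mul_of_nonneg_right (by exact_mod_cast (by omega : u + 1 - 1 ≤ T)) (by positivity)

lemma Piaux_mem_Icc {α B : ℝ} (hα : 0 ≤ α) {e : ℕ → ℝ} {t : ℕ}
    (hG : ∀ u ≤ t, Gaux S r N e u ≤ B) : Piaux α S r N e t ∈ Set.Icc 0 (α * B) := by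
  have hG0 : Gaux S r N e 0 = 0 := by simp [Gaux]
  have hsup := Finset.le_sup' (fun u => Gaux S r N e u) (Finset.mem_range.2 t.succ_pos)
  rw [hG0] at hsup
  exact ⟨mul_nonneg hα hsup, mul_le_mul_of_nonneg_left
    (Finset.sup'_le _ _ fun u hu => hG u (Nat.lt_succ_iff.1 (Finset.mem_range.1 hu))) hα⟩

lemma abs_etaHist_succ_le {α x E : ℝ} (hα : 0 ≤ α)
    (hr : ∀ v ≤ T, 0 ≤ r v ∧ r v ≤ c) (hS : ∀ v ≤ T, ∑ j, |S v j| ≤ c)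
    (hm : 0 ≤ m) (hN : ∀ i t j, t ≤ T → 0 ≤ N i t j ∧ N i t j ≤ m) {t s : ℕ} (ht : t + 1 ≤ T)
    (hs : t < s) (he : ∀ u, |etaHist α x S r N t u| ≤ E) (hmE : m ≤ E) :
    |etaHist α x S r N (t + 1) s| ≤ wealthGrowth α T c * E := by
  have hc : 0 ≤ c := (hr 0 (Nat.zero_le _)).1.trans (hr 0 (Nat.zero_le _)).2
  have hE : 0 ≤ E := hm.trans hmE
  rw [etaHist_succ, if_neg (by omega)]
  set e := etaHist α x S r N t
  have hX : ∀ j, |(∑ i ∈ Finset.range (t + 1), (N i t j - N i (t + 1) j))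
      - N (t + 1) (t + 1) j| ≤ (T + 1) * m := by
    intro j
    have hsold : |∑ i ∈ Finset.range (t + 1), (N i t j - N i (t + 1) j)| ≤ T * m := by
      refine (Finset.abs_sum_le_sum_abs _ _).trans
        ((Finset.sum_le_card_nsmul _ _ m fun i _ => ?_).trans ?_)
      · exact (abs_sub_le_of_le_of_le (hN i t j (by omega)).1 (hN i t j (by omega)).2
          (hN i (t + 1) j ht).1 (hN i (t + 1) j ht).2).trans_eq (sub_zero m)
      · rw [Finset.card_range, nsmul_eq_mul]
        exact mul_le_mul_of_nonneg_right (by exact_mod_cast ht) hm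
    have hbought : |N (t + 1) (t + 1) j| ≤ m :=
      (abs_of_nonneg (hN _ _ j ht).1).trans_le (hN _ _ j ht).2
    calc _ ≤ _ := abs_sub _ _
      _ ≤ T * m + m := add_le_add hsold hbought
      _ = (T + 1) * m := by ring
  have htrade := (abs_dotp_le hX _).trans
    (mul_le_mul_of_nonneg_left (hS (t + 1) ht) (by positivity))
  have hG : ∀ u ≤ t + 1, Gaux S r N e u ≤ T * (c * (E + 2 * T * m)) := fun u hu =>
    (le_abs_self _).trans (abs_Gaux_le hr hS hm hN he (hu.trans ht))
  have hPi₁ := Piaux_mem_Icc hα hG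
  have hPi₀ := Piaux_mem_Icc hα fun u hu => hG u (hu.trans t.le_succ)
  have htax := (abs_sub_le_of_le_of_le hPi₁.1 hPi₁.2 hPi₀.1 hPi₀.2).trans_eq (sub_zero _)
  have hrt := hr (t + 1) ht
  have hinterest : |r (t + 1) * e t| ≤ c * E := by
    rw [abs_mul, abs_of_nonneg hrt.1]
    exact mul_le_mul hrt.2 (he t) (abs_nonneg _) hc
  have hmE' := mul_le_mul_of_nonneg_right hmE
    (by positivity : (0 : ℝ) ≤ (T + 1) * c + 2 * α * T ^ 2 * c)
  calc _ ≤ _ := abs_sub _ _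
    _ ≤ |e t| + |r (t + 1) * e t| + |dotp _ _|
        + |Piaux α S r N e (t + 1) - Piaux α S r N e t| := by
      gcongr
      exact (abs_add_le _ _).trans (by gcongr; exact abs_add_le _ _)
    _ ≤ E + c * E + (T + 1) * m * c + α * (T * (c * (E + 2 * T * m))) := by gcongr; exact he t
    _ ≤ wealthGrowth α T c * E := by unfold wealthGrowth; linarith

theorem abs_etaHist_le {α x : ℝ} (hα : 0 ≤ α)
    (hr : ∀ v ≤ T, 0 ≤ r v ∧ r v ≤ c) (hS : ∀ v ≤ T, ∑ j, |S v j| ≤ c)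
    (hm : 0 ≤ m) (hN : ∀ i t j, t ≤ T → 0 ≤ N i t j ∧ N i t j ≤ m) {t : ℕ} (ht : t ≤ T)
    (s : ℕ) :
    |etaHist α x S r N t s| ≤ (|x| + m) * wealthGrowth α T c ^ (t + 1) := by
  have hc : 0 ≤ c := (hr 0 (Nat.zero_le _)).1.trans (hr 0 (Nat.zero_le _)).2
  have hL := one_le_wealthGrowth (T := T) hα hc
  induction t generalizing s with
  | zero =>
    have hdot : |dotp (fun j => N 0 0 j) (fun j => S 0 j)| ≤ m * c :=
      (abs_dotp_le (fun j => (abs_of_nonneg (hN 0 0 j ht).1).trans_le (hN 0 0 j ht).2) _).trans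
        (mul_le_mul_of_nonneg_left (hS 0 ht) hm)
    have hxL := mul_le_mul_of_nonneg_left hL (abs_nonneg x)
    have hmL := mul_le_mul_of_nonneg_left (le_wealthGrowth (T := T) hα hc) hm
    rw [etaHist_zero, zero_add, pow_one]
    calc _ ≤ _ := abs_sub _ _
      _ ≤ |x| + m * c := by gcongr
      _ ≤ (|x| + m) * wealthGrowth α T c := by linarith
  | succ t ih =>
    have hE : ∀ s, |etaHist α x S r N t s| ≤ (|x| + m) * wealthGrowth α T c ^ (t + 1) :=
      ih (by omega)
    have hmE : m ≤ (|x| + m) * wealthGrowth α T c ^ (t + 1) :=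
      calc m ≤ (|x| + m) * 1 := by linarith [abs_nonneg x]
        _ ≤ _ := mul_le_mul_of_nonneg_left (one_le_pow₀ hL) (by positivity)
    rcases le_or_gt s t with hs | hs
    · rw [etaHist_succ, if_pos hs, pow_succ]
      exact (hE s).trans
        (mul_le_mul_of_nonneg_left (le_mul_of_one_le_right (by positivity) hL) (by positivity))
    · calc _ ≤ wealthGrowth α T c * ((|x| + m) * wealthGrowth α T c ^ (t + 1)) :=
            abs_etaHist_succ_le hα hr hS hm hN ht hs hE hmE
        _ = _ := by ring

end WealthBound

section Strategies

lemma le_stratMax {Ω : Type*} {N : ℕ → ℕ → Ω → Fin d → ℝ} {ω : Ω} {i : ℕ} (hi : i < T)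
    (j : Fin d) : N i i ω j ≤ stratMax T N ω := by
  set g : ℕ → ℝ := fun i => ⨆ j, N i i ω j
  have hbdd : BddAbove (Set.range fun i => ⨆ (_ : i ∈ Finset.range T), g i) := by
    refine (((Finset.range T).finite_toSet.image g).insert 0).bddAbove.mono ?_
    rintro _ ⟨i, rfl⟩
    by_cases hi : i ∈ Finset.range T
    · exact Or.inr ⟨i, hi, (ciSup_pos (f := fun _ => g i) hi).symm⟩
    · exact Or.inl (by simp [hi])
  refine le_ciSup_of_le hbdd i ?_
  rw [ciSup_pos (Finset.mem_range.2 hi)]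
  exact le_ciSup (Finite.bddAbove_range _) j

lemma stratMax_nonneg {Ω : Type*} {N : ℕ → ℕ → Ω → Fin d → ℝ} {ω : Ω}
    (hN : ∀ i j, 0 ≤ N i i ω j) : 0 ≤ stratMax T N ω :=
  Real.iSup_nonneg fun i => Real.iSup_nonneg fun _ => Real.iSup_nonneg fun j => hN i j

variable {M : Market Ω T d} {N : ℕ → ℕ → Ω → Fin d → ℝ}

lemma Market.IsStrategy.smul (hN : M.IsStrategy N) {c : ℝ} (hc : 0 ≤ c) :
    M.IsStrategy (fun i t ω j => c * N i t ω j) := by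
  obtain ⟨hmeas, hnonneg, hanti, hliq, hbefore⟩ := hN
  refine ⟨fun i t => (hmeas i t).const_smul c,
    fun i t ω j => mul_nonneg hc (hnonneg i t ω j),
    fun i t hit htT ω j => mul_le_mul_of_nonneg_left (hanti i t hit htT ω j) hc,
    fun i ω j => by simp only [hliq i ω j, mul_zero],
    fun i t hti ω j => by simp only [hbefore i t hti ω j, mul_zero]⟩

lemma Market.IsStrategy.le_diag (hN : M.IsStrategy N) {i t : ℕ} (hit : i ≤ t) (htT : t < T)
    (ω : Ω) (j : Fin d) : N i t ω j ≤ N i i ω j := by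
  induction t, hit using Nat.le_induction with
  | base => exact le_rfl
  | succ t hit ih => exact (hN.2.2.1 i t hit (by omega) ω j).trans (ih (by omega))

lemma Market.IsStrategy.le_stratMax (hN : M.IsStrategy N) (i : ℕ) {t : ℕ} (ht : t ≤ T)
    (ω : Ω) (j : Fin d) : N i t ω j ≤ stratMax T N ω := by
  have hmax := stratMax_nonneg (T := T) fun i j => hN.2.1 i i ω j
  rcases lt_or_ge t i with hti | hit
  · exact (hN.2.2.2.2 i t hti ω j).trans_le hmax
  rcases ht.lt_or_eq with htT | rfl
  · exact (hN.le_diag hit htT ω j).trans (_root_.le_stratMax (hit.trans_lt htT) j)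
  · exact (hN.2.2.2.1 i ω j).trans_le hmax

end Strategies

section MarketBound

variable (M : Market Ω T d)

def Market.magnitude (ω : Ω) : ℝ := ∑ u ∈ Finset.range (T + 1), (M.r u ω + ∑ j, |M.S u ω j|)

lemma Market.measurable_magnitude : Measurable M.magnitude := by
  have hr : ∀ u, Measurable (M.r u) := fun u => (M.r_adapted u).mono (M.F_le u) le_rfl
  have hS : ∀ u, Measurable (M.S u) := fun u => (M.S_adapted u).mono (M.F_le u) le_rfl
  unfold Market.magnitude
  fun_prop

lemma Market.bounds_le_magnitude {u : ℕ} (hu : u ≤ T) (ω : Ω) :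
    (0 ≤ M.r u ω ∧ M.r u ω ≤ M.magnitude ω) ∧ ∑ j, |M.S u ω j| ≤ M.magnitude ω := by
  have hterm : ∀ v ∈ Finset.range (T + 1), 0 ≤ M.r v ω + ∑ j, |M.S v ω j| := fun v _ =>
    add_nonneg (M.r_nonneg v ω) (Finset.sum_nonneg fun j _ => abs_nonneg _)
  have hle := Finset.single_le_sum hterm (Finset.mem_range.2 (Nat.lt_succ_of_le hu))
  have hSnn : 0 ≤ ∑ j, |M.S u ω j| := Finset.sum_nonneg fun j _ => abs_nonneg _
  exact ⟨⟨M.r_nonneg u ω, by unfold Market.magnitude; linarith⟩,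
    by unfold Market.magnitude; linarith [M.r_nonneg u ω]⟩

def Market.wealthFactor (α : ℝ) (ω : Ω) : ℝ := wealthGrowth α T (M.magnitude ω) ^ (T + 1)

lemma Market.measurable_wealthFactor (α : ℝ) : Measurable (M.wealthFactor α) := by
  have := M.measurable_magnitude
  unfold Market.wealthFactor wealthGrowth
  fun_prop

lemma Market.wealthFactor_nonneg {α : ℝ} (hα : 0 ≤ α) (ω : Ω) : 0 ≤ M.wealthFactor α ω := by
  have hr₀ := (M.bounds_le_magnitude (Nat.zero_le T) ω).1
  exact pow_nonneg (zero_le_one.trans (one_le_wealthGrowth hα (hr₀.1.trans hr₀.2))) _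

lemma Market.V_le_mul_wealthFactor {α : ℝ} (hα : 0 ≤ α) {N : ℕ → ℕ → Ω → Fin d → ℝ}
    (hN : M.IsStrategy N) (x : ℝ) (ω : Ω) :
    M.V α x N ω ≤ (|x| + stratMax T N ω) * M.wealthFactor α ω :=
  (le_abs_self _).trans <| abs_etaHist_le hα (fun _ hu => (M.bounds_le_magnitude hu ω).1)
    (fun _ hu => (M.bounds_le_magnitude hu ω).2) (stratMax_nonneg fun i j => hN.2.1 i i ω j)
    (fun i t j ht => ⟨hN.2.1 i t ω j, hN.le_stratMax i ht ω j⟩) le_rfl T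

lemma Market.V_smul {c : ℝ} (hc : 0 ≤ c) (α x : ℝ) (N : ℕ → ℕ → Ω → Fin d → ℝ) (ω : Ω) :
    M.V α (c * x) (fun i t ω j => c * N i t ω j) ω = c * M.V α x N ω :=
  etaHist_smul hc α x (fun t => M.S t ω) (fun t => M.r t ω) (fun i u => N i u ω) T T

end MarketBound

section BoundedInProbability

lemma BoundedInL0.mono {P : Measure Ω} {𝒮 𝒯 : Set (Ω → ℝ)} (h𝒯 : BoundedInL0 P 𝒯)
    (h : 𝒮 ⊆ 𝒯) : BoundedInL0 P 𝒮 :=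
  fun ε hε => (h𝒯 ε hε).imp fun _ hC f hf => hC f (h hf)

lemma tendsto_measure_nat_mul_le {P : Measure Ω} [IsFiniteMeasure P] {g : Ω → ℝ}
    (hg : Measurable g) {δ : ℝ} (hδ : 0 < δ) :
    Tendsto (fun n : ℕ => P {ω | n * δ ≤ g ω}) atTop (nhds 0) := by
  have hanti : Antitone fun n : ℕ => {ω | n * δ ≤ g ω} := fun a b hab ω hω =>
    (mul_le_mul_of_nonneg_right (Nat.cast_le.2 hab) hδ.le).trans hω
  have hempty : ⋂ n : ℕ, {ω | n * δ ≤ g ω} = ∅ := by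
    refine Set.iInter_eq_empty_iff.2 fun ω => ?_
    obtain ⟨n, hn⟩ := exists_nat_gt (g ω / δ)
    exact ⟨n, not_le.2 ((div_lt_iff₀ hδ).1 hn)⟩
  have hlim := tendsto_measure_iInter_atTop
    (fun n => (measurableSet_le measurable_const hg).nullMeasurableSet) hanti
    ⟨0, measure_ne_top P _⟩
  rw [hempty, measure_empty] at hlim
  exact hlim

variable {P : Measure Ω} [IsFiniteMeasure P] {f D : Ω → ℝ} {Y : ℕ → Ω → ℝ}

lemma measure_lt_le_of_nat_mul_le (hD : Measurable D) (hD0 : ∀ ω, 0 ≤ D ω)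
    (hfY : ∀ n : ℕ, ∀ᵐ ω ∂P, n * f ω ≤ Y n ω * D ω) {C : ℝ} {ε : ENNReal}
    (hC : ∀ n, P {ω | C < |Y n ω|} ≤ ε) {δ : ℝ} (hδ : 0 < δ) :
    P {ω | δ < f ω} ≤ ε := by
  have hcover : ∀ n : ℕ, P {ω | δ < f ω} ≤ P {ω | n * δ ≤ C * D ω} + ε := fun n => by
    refine (measure_mono_ae ?_).trans ((measure_union_le _ _).trans (add_le_add le_rfl (hC n)))
    filter_upwards [hfY n] with ω hω hδf
    by_cases hY : C < |Y n ω|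
    · exact Or.inr hY
    · refine Or.inl ?_
      calc n * δ ≤ n * f ω := mul_le_mul_of_nonneg_left (le_of_lt hδf) n.cast_nonneg
        _ ≤ Y n ω * D ω := hω
        _ ≤ C * D ω := mul_le_mul_of_nonneg_right ((le_abs_self _).trans (not_lt.1 hY)) (hD0 ω)
  have hlim := (tendsto_measure_nat_mul_le (P := P) (hD.const_mul C) hδ).add_const ε
  rw [zero_add] at hlim
  exact ge_of_tendsto' hlim hcover

theorem ae_nonpos_of_nat_mul_le (hD : Measurable D) (hD0 : ∀ ω, 0 ≤ D ω)
    (hY : BoundedInL0 P (Set.range Y)) (hfY : ∀ n : ℕ, ∀ᵐ ω ∂P, n * f ω ≤ Y n ω * D ω) :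
    ∀ᵐ ω ∂P, f ω ≤ 0 := by
  have hnull : ∀ δ > 0, P {ω | δ < f ω} = 0 := fun δ hδ =>
    le_antisymm (ENNReal.le_of_forall_pos_le_add fun ε hε _ => by
      obtain ⟨C, hC⟩ := hY ε (by exact_mod_cast hε)
      rw [zero_add, ← ENNReal.ofReal_coe_nnreal]
      exact measure_lt_le_of_nat_mul_le hD hD0 hfY (fun n => hC _ ⟨n, rfl⟩) hδ) bot_le
  have hsmall : ∀ᵐ ω ∂P, ∀ k : ℕ, f ω ≤ 1 / (k + 1) := ae_all_iff.2 fun k => by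
    simpa only [ae_iff, not_le] using hnull _ Nat.one_div_pos_of_nat
  filter_upwards [hsmall] with ω hω
  exact ge_of_tendsto' tendsto_one_div_add_atTop_nhds_zero_nat hω

end BoundedInProbability

theorem NA_of_NUIBR_general
    (M : Market Ω T d) (α : ℝ) (hα0 : 0 ≤ α)
    (h : M.NUIBR α) : M.NA α := by
  intro N hN hV
  have := M.hProb
  obtain ⟨Rf, hRs, hRv, hRb⟩ := h 0
  let Nn : ℕ → ℕ → ℕ → Ω → Fin d → ℝ := fun n i t ω j => n * N i t ω j
  have hNn : ∀ n, M.IsStrategy (Nn n) := fun n => hN.smul n.cast_nonneg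
  have hVn : ∀ (n : ℕ) ω, M.V α 0 (Nn n) ω = n * M.V α 0 N ω := fun n ω => by
    simpa only [mul_zero] using M.V_smul n.cast_nonneg α 0 N ω
  have hbdd : BoundedInL0 M.P (Set.range fun n => stratMax T (Rf.apply (Nn n))) := by
    refine (hRb 0 le_rfl).mono ?_
    rintro _ ⟨n, rfl⟩
    refine subset_convexHull ℝ _ ⟨Nn n, hNn n, ?_, rfl⟩
    filter_upwards [hV] with ω hω
    rw [hVn, neg_zero]
    exact mul_nonneg n.cast_nonneg hω
  have hle : ∀ᵐ ω ∂M.P, M.V α 0 N ω ≤ 0 := by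
    refine ae_nonpos_of_nat_mul_le (M.measurable_wealthFactor α) (M.wealthFactor_nonneg hα0)
      hbdd fun n => ?_
    filter_upwards [hRv _ (hNn n)] with ω hω
    rw [← hVn]
    simpa only [abs_zero, zero_add] using
      hω.trans (M.V_le_mul_wealthFactor hα0 (hRs _ (hNn n)) 0 ω)
  filter_upwards [hV, hle] with ω h₀ h₁ using le_antisymm h₁ h₀

/-- The NUIBR condition implies the no-arbitrage condition. -/
theorem NA_of_NUIBR
    (M : Market Ω T d) (α : ℝ) (hα0 : 0 ≤ α) (hα1 : α < 1)
    (h : M.NUIBR α) : M.NA α :=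
  NA_of_NUIBR_general M α hα0 h

end
end
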